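/- arXiv:1306.6120 — 3 statements merged into one kernel-verified Lean document; each statement's English description precedes it below -/
import Mathlib

section
/- A triangulation T of the infinity-gon has at most one right-fountain and at most one left-fountain. -/
/-- An internal arc of the infinity-gon: a pair (m,n) of integers with n - m ≥ 2. -/
def IsArc (a : ℤ × ℤ) : Prop := a.1 + 2 ≤ a.2

/-- Two arcs (m,n) and (p,q) cross if m < p < n < q or p < m < q < n. -/
def Cross (a b : ℤ × ℤ) : Prop :=
  (a.1 < b.1 ∧ b.1 < a.2 ∧ a.2 < b.2) ∨ (b.1 < a.1 ∧ a.1 < b.2 ∧ b.2 < a.2)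

/-- A triangulation of the infinity-gon: a maximal set of pairwise non-crossing internal arcs. -/
def IsTriangulation (T : Set (ℤ × ℤ)) : Prop :=
  (∀ a ∈ T, IsArc a) ∧ (∀ a ∈ T, ∀ b ∈ T, ¬ Cross a b) ∧
    (∀ γ, IsArc γ → (∀ a ∈ T, ¬ Cross γ a) → γ ∈ T)

/-- n is a left-fountain of T: infinitely many arcs of T end at n. -/
def LeftFountain (T : Set (ℤ × ℤ)) (n : ℤ) : Prop := {m : ℤ | (m, n) ∈ T}.Infinite

/-- n is a right-fountain of T: infinitely many arcs of T start at n. -/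
def RightFountain (T : Set (ℤ × ℤ)) (n : ℤ) : Prop := {p : ℤ | (n, p) ∈ T}.Infinite

/-!
If `n < m` were both right-fountains, some arc `(n, p)` would have `p > m`, and then some arc
`(m, q)` would have `q > p`; these two arcs cross.
Left-fountains are handled dually.
-/

section

variable {T : Set (ℤ × ℤ)}

lemma RightFountain.exists_gt (harc : ∀ a ∈ T, IsArc a) {n : ℤ} (hn : RightFountain T n)
    (B : ℤ) : ∃ p, (n, p) ∈ T ∧ B < p := by
  have hbdd : BddBelow {p | (n, p) ∈ T} := ⟨n + 2, fun p hp => harc _ hp⟩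
  obtain ⟨p, hp, hBp⟩ :=
    not_bddAbove_iff.mp (fun habove => hn (hbdd.finite_of_bddAbove habove)) B
  exact ⟨p, hp, hBp⟩

lemma LeftFountain.exists_lt (harc : ∀ a ∈ T, IsArc a) {n : ℤ} (hn : LeftFountain T n)
    (B : ℤ) : ∃ m, (m, n) ∈ T ∧ m < B := by
  have hbdd : BddAbove {m | (m, n) ∈ T} :=
    ⟨n - 2, fun m hm => by have := harc _ hm; simp only [IsArc] at this; omega⟩
  obtain ⟨m, hm, hmB⟩ :=
    not_bddBelow_iff.mp (fun hbelow => hn (hbdd.finite_of_bddBelow hbelow)) B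
  exact ⟨m, hm, hmB⟩

lemma exists_cross_of_rightFountain_of_lt (harc : ∀ a ∈ T, IsArc a) {n m : ℤ} (hnm : n < m)
    (hn : RightFountain T n) (hm : RightFountain T m) : ∃ a ∈ T, ∃ b ∈ T, Cross a b := by
  obtain ⟨p, hp, hmp⟩ := hn.exists_gt harc m
  obtain ⟨q, hq, hpq⟩ := hm.exists_gt harc p
  exact ⟨_, hp, _, hq, Or.inl ⟨hnm, hmp, hpq⟩⟩

lemma exists_cross_of_leftFountain_of_lt (harc : ∀ a ∈ T, IsArc a) {n m : ℤ} (hnm : n < m)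
    (hn : LeftFountain T n) (hm : LeftFountain T m) : ∃ a ∈ T, ∃ b ∈ T, Cross a b := by
  obtain ⟨q, hq, hqn⟩ := hm.exists_lt harc n
  obtain ⟨p, hp, hpq⟩ := hn.exists_lt harc q
  exact ⟨_, hp, _, hq, Or.inl ⟨hpq, hqn, hnm⟩⟩

lemma RightFountain.eq (harc : ∀ a ∈ T, IsArc a) (hnc : ∀ a ∈ T, ∀ b ∈ T, ¬ Cross a b)
    {n m : ℤ} (hn : RightFountain T n) (hm : RightFountain T m) : n = m := by
  by_contra hne
  obtain ⟨a, ha, b, hb, hab⟩ := (lt_or_gt_of_ne hne).elim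
    (fun h => exists_cross_of_rightFountain_of_lt harc h hn hm)
    (fun h => exists_cross_of_rightFountain_of_lt harc h hm hn)
  exact hnc a ha b hb hab

lemma LeftFountain.eq (harc : ∀ a ∈ T, IsArc a) (hnc : ∀ a ∈ T, ∀ b ∈ T, ¬ Cross a b)
    {n m : ℤ} (hn : LeftFountain T n) (hm : LeftFountain T m) : n = m := by
  by_contra hne
  obtain ⟨a, ha, b, hb, hab⟩ := (lt_or_gt_of_ne hne).elim
    (fun h => exists_cross_of_leftFountain_of_lt harc h hn hm)
    (fun h => exists_cross_of_leftFountain_of_lt harc h hm hn)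
  exact hnc a ha b hb hab

end

theorem stmt2 (T : Set (ℤ × ℤ)) (hT : IsTriangulation T) :
    (∀ n m : ℤ, RightFountain T n → RightFountain T m → n = m) ∧
    (∀ n m : ℤ, LeftFountain T n → LeftFountain T m → n = m) := by
  obtain ⟨harc, hnc, -⟩ := hT
  exact ⟨fun _ _ => RightFountain.eq harc hnc, fun _ _ => LeftFountain.eq harc hnc⟩
end

section
/- Let T be a locally finite triangulation of the infinity-gon (each integer is an endpoint of only finitely many arcs of T) and let γ be any internal arc. Then there exists an arc ζ = (s,t) in T (or a pair of integers s < t with infinitely many arcs of T contained in [s,t]) such that γ is contained in the interval [s,t], i.e., s ≤ m < n ≤ t where γ = (m,n). More precisely: for every internal arc γ = (m,n), a locally finite triangulation T contains an arc (s,t) with s ≤ m and n ≤ t. -/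
/-- T is locally finite: each integer is an endpoint of only finitely many arcs of T. -/
def LocallyFinite' (T : Set (ℤ × ℤ)) : Prop :=
  ∀ k : ℤ, {a ∈ T | a.1 = k ∨ a.2 = k}.Finite

/-!
Local finiteness rules out fountains, and a triangulation without fountains has no maximal arc:
if no other arc of `T` spanned `(s, t)`, then for every `b > t` the arc `(s, b)` would have to be
crossed by an arc of `T` passing strictly over `b` and starting at or after `t`; the arcs of `T`
starting at `t` would then be unbounded, making `t` a right-fountain. Hence the arcs of `T` over
the edge `(m, m + 1)` form an infinite set, while only finitely many arcs of `T` end in the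
interval `(m, n)`, so one of them ends at or beyond `n`.
-/

def Spans (a b : ℤ × ℤ) : Prop := a.1 ≤ b.1 ∧ b.2 ≤ a.2

lemma Set.Nonempty.infinite_of_forall_exists_lt_map {ι α : Type*} [Preorder α] {s : Set ι}
    (f : ι → α) (hs : s.Nonempty) (h : ∀ i ∈ s, ∃ j ∈ s, f i < f j) : s.Infinite := by
  intro hfin
  obtain ⟨i, hi, hmax⟩ := hfin.exists_maximalFor f s hs
  obtain ⟨j, hj, hij⟩ := h i hi
  exact (hmax hj hij.le).not_gt hij

lemma LocallyFinite'.not_rightFountain {T : Set (ℤ × ℤ)} (hlf : LocallyFinite' T) (v : ℤ) :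
    ¬ RightFountain T v := by
  refine Set.not_infinite.mpr ((hlf v).preimage ?_ |>.subset fun p hp => ⟨hp, Or.inl rfl⟩)
  exact fun _ _ _ _ h => congrArg Prod.snd h

lemma LocallyFinite'.finite_snd_mem_Ioo {T : Set (ℤ × ℤ)} (hlf : LocallyFinite' T) (m n : ℤ) :
    {a ∈ T | a.2 ∈ Set.Ioo m n}.Finite := by
  refine ((Set.finite_Ioo m n).biUnion fun k _ => hlf k).subset ?_
  rintro a ⟨haT, hk⟩
  exact Set.mem_biUnion hk ⟨haT, Or.inr rfl⟩

namespace IsTriangulation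

variable {T : Set (ℤ × ℤ)}

lemma exists_cross_of_notMem (hT : IsTriangulation T) {γ : ℤ × ℤ} (hγ : IsArc γ) (hγT : γ ∉ T) :
    ∃ a ∈ T, Cross γ a := by
  by_contra! h
  exact hγT (hT.2.2 γ hγ h)

lemma rightFountain_of_forall_exists_over (hT : IsTriangulation T) (v : ℤ)
    (H : ∀ b, v < b → ∃ c d, (c, d) ∈ T ∧ v ≤ c ∧ c < b ∧ b < d) : RightFountain T v := by
  -- an arc `(c, d)` over `b` with `v ≤ c` must start at `v` when `(v, b)` is an arc of `T`
  -- (otherwise the two cross) or when `b = v + 1`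
  have step : ∀ b, v < b → ((v, b) ∈ T ∨ b = v + 1) → ∃ d ∈ {p | (v, p) ∈ T}, b < d := by
    intro b hvb hb
    obtain ⟨c, d, hcd, hvc, hcb, hbd⟩ := H b hvb
    obtain rfl : c = v := by
      rcases hb with hb | rfl
      · by_contra hne
        exact hT.2.1 _ hb _ hcd (Or.inl ⟨lt_of_le_of_ne hvc (Ne.symm hne), hcb, hbd⟩)
      · omega
    exact ⟨d, hcd, hbd⟩
  obtain ⟨d, hd, -⟩ := step (v + 1) (by omega) (Or.inr rfl)
  refine Set.Nonempty.infinite_of_forall_exists_lt_map id ⟨d, hd⟩ fun p hp => ?_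
  have hvp : v < p := by have := hT.1 _ hp; simp only [IsArc] at this; omega
  exact step p hvp (Or.inl hp)

lemma exists_mem_spans_ne (hT : IsTriangulation T) (hlf : LocallyFinite' T) {s t : ℤ}
    (hst : s < t) (hnc : ∀ a ∈ T, ¬ Cross (s, t) a) : ∃ a ∈ T, Spans a (s, t) ∧ a ≠ (s, t) := by
  by_contra! h
  refine hlf.not_rightFountain t (hT.rightFountain_of_forall_exists_over t fun b htb => ?_)
  have hsb : (s, b) ∉ T := fun hsbT => htb.ne' (congrArg Prod.snd (h _ hsbT ⟨le_rfl, htb.le⟩))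
  obtain ⟨⟨c, d⟩, hcdT, hcross⟩ :=
    hT.exists_cross_of_notMem (show IsArc (s, b) by simp only [IsArc]; omega) hsb
  have hnc' := hnc _ hcdT
  simp only [Cross] at hcross hnc'
  rcases hcross with ⟨hsc, hcb, hbd⟩ | ⟨hcs, hsd, hdb⟩
  · exact ⟨c, d, hcdT, by omega, hcb, hbd⟩
  · exact absurd (congrArg Prod.fst (h _ hcdT ⟨hcs.le, by omega⟩)) hcs.ne

lemma infinite_spans (hT : IsTriangulation T) (hlf : LocallyFinite' T) {s t : ℤ}
    (hst : s < t) (hnc : ∀ a ∈ T, ¬ Cross (s, t) a) : {a ∈ T | Spans a (s, t)}.Infinite := by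
  obtain ⟨a₀, ha₀T, ha₀, -⟩ := hT.exists_mem_spans_ne hlf hst hnc
  refine Set.Nonempty.infinite_of_forall_exists_lt_map (fun a => a.2 - a.1) ⟨a₀, ha₀T, ha₀⟩ ?_
  rintro ⟨p, q⟩ ⟨hpqT, hp, hq⟩
  have hpq : IsArc (p, q) := hT.1 _ hpqT
  obtain ⟨⟨p', q'⟩, hT', ⟨hp', hq'⟩, hne⟩ :=
    hT.exists_mem_spans_ne hlf (by simp only [IsArc] at hpq; omega) (hT.2.1 _ hpqT)
  rw [Ne, Prod.mk.injEq, not_and_or] at hne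
  dsimp only at hp hq hp' hq' ⊢
  exact ⟨(p', q'), ⟨hT', by dsimp only; omega, by dsimp only; omega⟩, by omega⟩

end IsTriangulation

theorem stmt6_general (T : Set (ℤ × ℤ)) (hT : IsTriangulation T) (hlf : LocallyFinite' T)
    (m n : ℤ) :
    ∃ s t : ℤ, (s, t) ∈ T ∧ s ≤ m ∧ n ≤ t := by
  have hedge : ∀ a ∈ T, ¬ Cross (m, m + 1) a := by
    intro a _ h
    simp only [Cross] at h
    omega
  obtain ⟨⟨s, t⟩, ⟨hT', hs, ht⟩, hnot⟩ :=
    ((hT.infinite_spans hlf (lt_add_one m) hedge).sdiff (hlf.finite_snd_mem_Ioo m n)).nonempty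
  simp only [Set.mem_ofPred_eq, Set.mem_Ioo, not_and, not_lt] at hnot ht
  exact ⟨s, t, hT', hs, hnot hT' (by omega)⟩

theorem stmt6 (T : Set (ℤ × ℤ)) (hT : IsTriangulation T) (hlf : LocallyFinite' T)
    (m n : ℤ) (hγ : IsArc (m, n)) :
    ∃ s t : ℤ, (s, t) ∈ T ∧ s ≤ m ∧ n ≤ t :=
  stmt6_general T hT hlf m n
end

section
/- Let T be a triangulation of the infinity-gon with left-fountain m₀ and right-fountain n₀ where n₀ - m₀ ≥ 2. Then every arc of T other than (m₀,n₀) either has both endpoints ≤ m₀, or both endpoints ≥ n₀, or both endpoints in the interval [m₀, n₀]. -/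
/-!
An arc of `T` cannot pass over a fountain: an arc `(x, y)` with `x < m₀ < y` would cross every arc
`(m, m₀)` of `T` with `m < x`, and the left-fountain supplies such an arc because its infinitely
many left endpoints are bounded above by `m₀`. Symmetrically no arc passes over `n₀`, and an arc
that stays on one side of both `m₀` and `n₀` is of one of the three kinds.
-/

theorem Set.Infinite.exists_lt_of_bddAbove {α : Type*} [LinearOrder α] [LocallyFiniteOrder α]
    {s : Set α} (hs : s.Infinite) (hb : BddAbove s) (x : α) : ∃ m ∈ s, m < x := by
  by_contra! hc
  exact hs (BddBelow.finite_of_bddAbove ⟨x, hc⟩ hb)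

theorem Set.Infinite.exists_gt_of_bddBelow {α : Type*} [LinearOrder α] [LocallyFiniteOrder α]
    {s : Set α} (hs : s.Infinite) (hb : BddBelow s) (x : α) : ∃ p ∈ s, x < p := by
  by_contra! hc
  exact hs (BddAbove.finite_of_bddBelow ⟨x, hc⟩ hb)

section Noncrossing

variable {T : Set (ℤ × ℤ)} (harc : ∀ a ∈ T, IsArc a) (hnc : ∀ a ∈ T, ∀ b ∈ T, ¬ Cross a b)
include harc hnc

theorem snd_le_or_le_fst_of_leftFountain {n : ℤ} (hl : LeftFountain T n) {a : ℤ × ℤ}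
    (ha : a ∈ T) : a.2 ≤ n ∨ n ≤ a.1 := by
  have hbdd : BddAbove {m : ℤ | (m, n) ∈ T} :=
    ⟨n, fun m hm => by have := harc _ hm; unfold IsArc at this; omega⟩
  obtain ⟨m, hm, hmx⟩ := hl.exists_lt_of_bddAbove hbdd a.1
  have := hnc a ha _ hm
  unfold Cross at this
  omega

theorem snd_le_or_le_fst_of_rightFountain {n : ℤ} (hr : RightFountain T n) {a : ℤ × ℤ}
    (ha : a ∈ T) : a.2 ≤ n ∨ n ≤ a.1 := by
  have hbdd : BddBelow {p : ℤ | (n, p) ∈ T} :=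
    ⟨n, fun p hp => by have := harc _ hp; unfold IsArc at this; omega⟩
  obtain ⟨p, hp, hyp⟩ := hr.exists_gt_of_bddBelow hbdd a.2
  have := hnc a ha _ hp
  unfold Cross at this
  omega

end Noncrossing

theorem stmt8_general (T : Set (ℤ × ℤ)) (hT : IsTriangulation T) (m₀ n₀ : ℤ)
    (hl : LeftFountain T m₀) (hr : RightFountain T n₀) :
    ∀ a ∈ T, a ≠ (m₀, n₀) →
      (a.1 ≤ m₀ ∧ a.2 ≤ m₀) ∨ (n₀ ≤ a.1 ∧ n₀ ≤ a.2) ∨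
      (m₀ ≤ a.1 ∧ a.1 ≤ n₀ ∧ m₀ ≤ a.2 ∧ a.2 ≤ n₀) := by
  obtain ⟨harc, hnc, -⟩ := hT
  intro a ha _
  have hxy : a.1 + 2 ≤ a.2 := harc a ha
  have hm₀ := snd_le_or_le_fst_of_leftFountain harc hnc hl ha
  have hn₀ := snd_le_or_le_fst_of_rightFountain harc hnc hr ha
  omega

theorem stmt8 (T : Set (ℤ × ℤ)) (hT : IsTriangulation T) (m₀ n₀ : ℤ)
    (hl : LeftFountain T m₀) (hr : RightFountain T n₀) (h : m₀ + 2 ≤ n₀) :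
    ∀ a ∈ T, a ≠ (m₀, n₀) →
      (a.1 ≤ m₀ ∧ a.2 ≤ m₀) ∨ (n₀ ≤ a.1 ∧ n₀ ≤ a.2) ∨
      (m₀ ≤ a.1 ∧ a.1 ≤ n₀ ∧ m₀ ≤ a.2 ∧ a.2 ≤ n₀) :=
  stmt8_general T hT m₀ n₀ hl hr
end
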